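/- Let Γ = (P, L, I) be a finite weak generalized hexagon of order (s,t) and let Γ' = (P', L') be a subhexagon of Γ of order (k,t) (same second parameter t, i.e., an ideal subhexagon). If k^2 · t = s, then every line of Γ either belongs to L' or shares an incident point of Γ with some line of L'. -/

import Mathlib

/-- The incidence graph of a point-line geometry. -/
def IncidenceGraph {P L : Type*} (I : P → L → Prop) : SimpleGraph (P ⊕ L) where
  Adj x y :=
    (∃ p l, x = Sum.inl p ∧ y = Sum.inr l ∧ I p l) ∨
    (∃ p l, x = Sum.inr l ∧ y = Sum.inl p ∧ I p l)
  symm := by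
    refine ⟨?_⟩
    rintro x y (⟨p, l, hx, hy, h⟩ | ⟨p, l, hx, hy, h⟩)
    · exact Or.inr ⟨p, l, hy, hx, h⟩
    · exact Or.inl ⟨p, l, hy, hx, h⟩
  loopless := by
    refine ⟨?_⟩
    rintro x (⟨p, l, hx, hy, h⟩ | ⟨p, l, hx, hy, h⟩) <;> subst hx <;> simp_all

/-- A finite weak generalized hexagon: the incidence graph is connected, has girth
exactly 12, and has all pairwise distances at most 6. -/
def IsWeakGenHexagon {P L : Type*} (I : P → L → Prop) : Prop :=
  (IncidenceGraph I).Connected ∧ (IncidenceGraph I).girth = 12 ∧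
    ∀ x y, (IncidenceGraph I).dist x y ≤ 6

/-- The geometry has order (s,t): every line is incident with exactly s+1 points
and every point with exactly t+1 lines. -/
def HasOrder {P L : Type*} (I : P → L → Prop) (s t : ℕ) : Prop :=
  (∀ l, {p | I p l}.ncard = s + 1) ∧ (∀ p, {l | I p l}.ncard = t + 1)

/-!
Let `l` be a line outside `L'` meeting no line of `L'`. Since `Γ'` has the same `t` as `Γ`, every
line of `Γ` through a point of `P'` lies in `L'`. Hence each point `p ∈ P'` is at distance exactly
5 from `l` in the incidence graph, along a chain `p, m, y, n, x, l` with `m ∈ L'`, `y ∉ P'` and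
`n ∉ L'`. The line `n` determines `m`: two lines of `L'` meeting `n` outside `P'`, joined by a
path of length at most 6 inside `Γ'`, would close a cycle of length at most 10 in `Γ`. Therefore
`|P'| ≤ (k + 1) (s + 1) t`. On the other hand, the ball of radius 5 around a line of `Γ'` is a
tree, so `|P'| ≥ (k + 1) (1 + k t + k² t²)`. For `s = k² t` and `k ≥ 1` the two bounds clash.
-/

open SimpleGraph Sum

namespace SimpleGraph

variable {V : Type*} {G : SimpleGraph V}

theorem Walk.IsPath.eq_of_length_add_length_lt_girth {u v : V} {p q : G.Walk u v}
    (hp : p.IsPath) (hq : q.IsPath) (hlen : p.length + q.length < G.girth) : p = q := by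
  by_contra hne
  obtain ⟨_, -, -, c, hc, hc_len⟩ := hp.exists_isCycle_length_le_add_of_ne hq hne
  have := girth_le_length hc
  omega

theorem Walk.IsPath.support_subset_range {V' : Type*} {G' : SimpleGraph V'} (f : G' →g G)
    (hf : Function.Injective f) (hconn : G'.Connected) {D : ℕ} (hD : ∀ a b, G'.dist a b ≤ D)
    {u v : V} (hu : u ∈ Set.range f) (hv : v ∈ Set.range f) {w : G.Walk u v} (hw : w.IsPath)
    (hlen : w.length + D < G.girth) : ∀ x ∈ w.support, x ∈ Set.range f := by
  obtain ⟨a, rfl⟩ := hu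
  obtain ⟨b, rfl⟩ := hv
  obtain ⟨q, hq, hq_len⟩ := (hconn a b).exists_path_of_dist
  have hmap : w = q.map f :=
    hw.eq_of_length_add_length_lt_girth (hq.map hf) (by grind [Walk.length_map])
  intro x hx
  rw [hmap, Walk.support_map, List.mem_map] at hx
  obtain ⟨y, -, rfl⟩ := hx
  exact ⟨y, rfl⟩

theorem injective_of_isPath_of_two_mul_lt_girth {X : Type*} {v : V} {e : X → V}
    (w : ∀ x, G.Walk v (e x)) (hpath : ∀ x, (w x).IsPath) {r : ℕ} (hlen : ∀ x, (w x).length ≤ r)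
    (hg : 2 * r < G.girth) (hsupp : Function.Injective fun x => (w x).support) :
    Function.Injective e := by
  intro x y hxy
  apply hsupp
  have := (hpath x).eq_of_length_add_length_lt_girth ((Walk.isPath_copy _ rfl hxy.symm).2 (hpath y))
    (by grind [Walk.length_copy])
  simpa using congrArg Walk.support this

end SimpleGraph

lemma Nat.card_and_ne_of_ncard_eq {α : Type*} {R : α → Prop} {n : ℕ} {a₀ : α}
    (hR : {a | R a}.ncard = n + 1) (ha₀ : R a₀) : Nat.card {a // R a ∧ a ≠ a₀} = n := by
  have hset : {a | R a ∧ a ≠ a₀} = {a | R a} \ {a₀} := by ext; simp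
  rw [← Set.coe_ofPred, Nat.card_coe_set_eq, hset,
    Set.ncard_sdiff_singleton_of_mem (show a₀ ∈ {a | R a} from ha₀), hR]
  rfl

lemma Nat.card_sigma_of_card_eq {α : Type*} {β : α → Type*} [Finite α] [∀ a, Finite (β a)]
    {c : ℕ} (h : ∀ a, Nat.card (β a) = c) : Nat.card (Σ a, β a) = Nat.card α * c := by
  have := Fintype.ofFinite α
  simp [Nat.card_sigma, h, Nat.card_eq_fintype_card]

lemma Nat.card_le_mul_card_of_ncard_fiber_le {α β : Type*} [Finite α] [Finite β] (f : α → β)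
    {c : ℕ} (h : ∀ b, {a | f a = b}.ncard ≤ c) : Nat.card α ≤ c * Nat.card β := by
  have := Fintype.ofFinite β
  rw [← Nat.card_congr (Equiv.sigmaFiberEquiv f), Nat.card_sigma, Nat.card_eq_fintype_card,
    mul_comm, ← smul_eq_mul, ← Finset.card_univ, ← Finset.sum_const]
  exact Finset.sum_le_sum fun b _ => by rw [← Set.coe_ofPred, Nat.card_coe_set_eq]; exact h b
namespace IncidenceGraph

section Incidence

variable {P L : Type*} {I : P → L → Prop} {p q : P} {l m : L}

@[simp] lemma adj_inl_inr : (IncidenceGraph I).Adj (inl p) (inr l) ↔ I p l := by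
  simp [IncidenceGraph]

@[simp] lemma adj_inr_inl : (IncidenceGraph I).Adj (inr l) (inl p) ↔ I p l := by
  simp [IncidenceGraph]

@[simp] lemma not_adj_inl_inl : ¬ (IncidenceGraph I).Adj (inl p) (inl q) := by
  simp [IncidenceGraph]

@[simp] lemma not_adj_inr_inr : ¬ (IncidenceGraph I).Adj (inr l) (inr m) := by
  simp [IncidenceGraph]

lemma eq_of_incident_of_incident (hg : 4 < (IncidenceGraph I).girth) (hpq : p ≠ q)
    (hpl : I p l) (hql : I q l) (hpm : I p m) (hqm : I q m) : l = m := by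
  let w (n : L) (hp : I p n) (hq : I q n) : (IncidenceGraph I).Walk (inl p) (inl q) :=
    .cons (adj_inl_inr.2 hp) (.cons (adj_inr_inl.2 hq) .nil)
  have hw : ∀ n hp hq, (w n hp hq).IsPath := fun n hp hq => .mk' (by simp [w, hpq])
  have := (hw l hpl hql).eq_of_length_add_length_lt_girth (hw m hpm hqm) (by simpa [w])
  simpa [w] using congrArg Walk.support this

lemma incident_or_exists_walk (w : (IncidenceGraph I).Walk (inl p) (inr l)) :
    I p l ∨ ∃ m x, I p m ∧ I x m ∧
      ∃ w' : (IncidenceGraph I).Walk (inl x) (inr l), w'.length + 2 = w.length := by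
  cases w with
  | @cons _ v _ h w =>
    rcases v with _ | m
    · simp at h
    cases w with
    | nil => exact .inl (adj_inl_inr.1 h)
    | @cons _ v' _ h' w' =>
      rcases v' with x | _
      · exact .inr ⟨m, x, adj_inl_inr.1 h, adj_inr_inl.1 h', w', by simp⟩
      · simp at h'

lemma exists_chain_of_walk (w : (IncidenceGraph I).Walk (inl p) (inr l)) (hw : w.length ≤ 6) :
    I p l ∨ (∃ m x, I p m ∧ I x m ∧ I x l) ∨
      ∃ m y n x, I p m ∧ I y m ∧ I y n ∧ I x n ∧ I x l := by
  rcases incident_or_exists_walk w with h | ⟨m, y, hpm, hym, w₁, hw₁⟩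
  · exact .inl h
  rcases incident_or_exists_walk w₁ with h | ⟨n, x, hyn, hxn, w₂, hw₂⟩
  · exact .inr (.inl ⟨m, y, hpm, hym, h⟩)
  rcases incident_or_exists_walk w₂ with h | ⟨_, _, -, -, w₃, hw₃⟩
  · exact .inr (.inr ⟨m, y, n, x, hpm, hym, hyn, hxn, h⟩)
  cases Walk.eq_of_length_eq_zero (show w₃.length = 0 by omega)

end Incidence

section Subgeometry

variable {P L : Type*} {I : P → L → Prop} {P' : Set P} {L' : Set L} {p : P} {l : L}

def subgeometryHom (P' : Set P) (L' : Set L) :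
    IncidenceGraph (fun (p : P') (l : L') => I p l) →g IncidenceGraph I where
  toFun := Sum.map Subtype.val Subtype.val
  map_rel' := by rintro (p | l) (q | m) h <;> simp_all

lemma subgeometryHom_injective : Function.Injective (subgeometryHom (I := I) P' L') :=
  Sum.map_injective.2 ⟨Subtype.val_injective, Subtype.val_injective⟩

lemma mem_of_incident {t : ℕ} (hdeg : {l | I p l}.ncard = t + 1)
    (hdeg' : {l : L' | I p l}.ncard = t + 1) (hl : I p l) : l ∈ L' := by
  have himage : Subtype.val '' {l : L' | I p l} = {l | I p l} :=
    Set.eq_of_subset_of_ncard_le (by rintro _ ⟨l, hl, rfl⟩; exact hl)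
      (by rw [Set.ncard_image_of_injective _ Subtype.val_injective, hdeg, hdeg'])
      (Set.finite_of_ncard_ne_zero (by omega))
  obtain ⟨l, -, rfl⟩ : l ∈ Subtype.val '' {l : L' | I p l} := himage ▸ hl
  exact l.2

lemma eq_of_incident_of_not_mem (hg : 10 < (IncidenceGraph I).girth)
    (hconn' : (IncidenceGraph (fun (p : P') (l : L') => I p l)).Connected)
    (hdist' : ∀ a b, (IncidenceGraph (fun (p : P') (l : L') => I p l)).dist a b ≤ 6)
    {m₁ m₂ : L'} {y₁ y₂ : P} {n : L} (hy₁ : y₁ ∉ P') (hn : n ∉ L')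
    (h₁ : I y₁ m₁) (h₁' : I y₁ n) (h₂ : I y₂ m₂) (h₂' : I y₂ n) : m₁ = m₂ := by
  by_contra hne
  have hne' : (m₁ : L) ≠ m₂ := Subtype.val_injective.ne hne
  have hn₁ : (m₁ : L) ≠ n := fun h => hn (h ▸ m₁.2)
  have hn₂ : (m₂ : L) ≠ n := fun h => hn (h ▸ m₂.2)
  have hshort : ∀ w : (IncidenceGraph I).Walk (inr m₁) (inr m₂), w.IsPath →
      w.length ≤ 4 → inl y₁ ∉ w.support := fun w hw hlen hy => by
    obtain ⟨z | z, hz⟩ := hw.support_subset_range _ subgeometryHom_injective hconn' hdist'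
      ⟨inr m₁, rfl⟩ ⟨inr m₂, rfl⟩ (lt_of_le_of_lt (Nat.add_le_add_right hlen 6) hg) _ hy
    · exact hy₁ (Sum.inl_injective hz ▸ z.2)
    · simp [subgeometryHom] at hz
  by_cases hy : y₁ = y₂
  · subst hy
    exact hshort (.cons (adj_inr_inl.2 h₁) (.cons (adj_inl_inr.2 h₂) .nil))
      (.mk' (by simp [hne'])) (by simp) (by simp)
  · exact hshort (.cons (adj_inr_inl.2 h₁) (.cons (adj_inl_inr.2 h₁')
      (.cons (adj_inr_inl.2 h₂') (.cons (adj_inl_inr.2 h₂) .nil))))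
      (.mk' (by simp [hne', hn₁, hy, hn₂.symm])) (by simp) (by simp)

end Subgeometry

section LowerBound

variable {Q M : Type*} {J : Q → M → Prop} {k t : ℕ} {p : Q} {m l₀ : M}

abbrev Branch (J : Q → M → Prop) (p : Q) (m : M) : Type _ :=
  Σ n : {n // J p n ∧ n ≠ m}, {r // J r n ∧ r ≠ p}

def Branch.walk (b : Branch J p m) : (IncidenceGraph J).Walk (inl p) (inl b.2.1) :=
  .cons (adj_inl_inr.2 b.1.2.1) (.cons (adj_inr_inl.2 b.2.2.1) .nil)

lemma card_branch [Finite Q] [Finite M] (hlines : ∀ m, {q | J q m}.ncard = k + 1)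
    (hpoints : ∀ q, {m | J q m}.ncard = t + 1) (h : J p m) : Nat.card (Branch J p m) = t * k := by
  unfold Branch
  rw [Nat.card_sigma_of_card_eq fun n : {n // J p n ∧ n ≠ m} =>
      Nat.card_and_ne_of_ncard_eq (R := fun r => J r n.1) (hlines n.1) n.2.1,
    Nat.card_and_ne_of_ncard_eq (hpoints p) h]

/- Non-backtracking chains from the line `l₀`: `l₀, p`, then `l₀, p, m, q` (`Level1`) and
`l₀, p, m, q, n, r` (`Level2`). -/
abbrev Level1 (J : Q → M → Prop) (l₀ : M) : Type _ :=
  Σ p : {p // J p l₀}, Branch J p l₀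

abbrev Level2 (J : Q → M → Prop) (l₀ : M) : Type _ :=
  Σ c : Level1 J l₀, Branch J c.2.2.1 c.2.1.1

abbrev chainEnd : {p // J p l₀} ⊕ Level1 J l₀ ⊕ Level2 J l₀ → Q
  | inl p => p
  | inr (inl c) => c.2.2.1
  | inr (inr d) => d.2.2.1

def chainWalk :
    (x : {p // J p l₀} ⊕ Level1 J l₀ ⊕ Level2 J l₀) →
      (IncidenceGraph J).Walk (inr l₀) (inl (chainEnd x))
  | inl p => .cons (adj_inr_inl.2 p.2) .nil
  | inr (inl c) => (Walk.cons (adj_inr_inl.2 c.1.2) .nil).append c.2.walk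
  | inr (inr d) => ((Walk.cons (adj_inr_inl.2 d.1.1.2) .nil).append d.1.2.walk).append d.2.walk

lemma chainWalk_isPath (hg : 4 < (IncidenceGraph J).girth)
    (x : {p // J p l₀} ⊕ Level1 J l₀ ⊕ Level2 J l₀) : (chainWalk x).IsPath := by
  refine .mk' ?_
  rcases x with ⟨p, hp⟩ | ⟨⟨p, hp⟩, ⟨m, hpm, hm⟩, ⟨q, hqm, hq⟩⟩ |
    ⟨⟨⟨p, hp⟩, ⟨m, hpm, hm⟩, ⟨q, hqm, hq⟩⟩, ⟨n, hqn, hn⟩, ⟨r, hrn, hr⟩⟩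
  · simp [chainWalk]
  · simp [chainWalk, Branch.walk, hq.symm, hm.symm]
  · have hnl : n ≠ l₀ := fun h => hm (eq_of_incident_of_incident hg hq (h ▸ hqn) hp hqm hpm).symm
    have hrp : r ≠ p := by
      rintro rfl
      exact hn (eq_of_incident_of_incident hg hq.symm hrn hqn hpm hqm)
    simp [chainWalk, Branch.walk, hm.symm, hq.symm, hnl.symm, hn.symm, hr.symm, hrp.symm]

lemma chainWalk_length_le (x : {p // J p l₀} ⊕ Level1 J l₀ ⊕ Level2 J l₀) :
    (chainWalk x).length ≤ 5 := by
  rcases x with _ | _ | _ <;> simp [chainWalk, Branch.walk]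

lemma chainWalk_support_injective :
    Function.Injective fun x : {p // J p l₀} ⊕ Level1 J l₀ ⊕ Level2 J l₀ =>
      (chainWalk x).support := by
  rintro (⟨p, hp⟩ | ⟨⟨p, hp⟩, ⟨m, hm⟩, ⟨q, hq⟩⟩ |
      ⟨⟨⟨p, hp⟩, ⟨m, hm⟩, ⟨q, hq⟩⟩, ⟨n, hn⟩, ⟨r, hr⟩⟩)
    (⟨p', hp'⟩ | ⟨⟨p', hp'⟩, ⟨m', hm'⟩, ⟨q', hq'⟩⟩ |
      ⟨⟨⟨p', hp'⟩, ⟨m', hm'⟩, ⟨q', hq'⟩⟩, ⟨n', hn'⟩, ⟨r', hr'⟩⟩) h <;>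
    simp [chainWalk, Branch.walk] at h
  · subst h; rfl
  · obtain ⟨rfl, rfl, rfl⟩ := h; rfl
  · obtain ⟨rfl, rfl, rfl, rfl, rfl⟩ := h; rfl

lemma card_points_ge [Finite Q] [Finite M] (hg : 10 < (IncidenceGraph J).girth)
    (hlines : ∀ m, {q | J q m}.ncard = k + 1) (hpoints : ∀ q, {m | J q m}.ncard = t + 1)
    (l₀ : M) : (k + 1) * (1 + t * k + (t * k) ^ 2) ≤ Nat.card Q := by
  have hinj : Function.Injective (chainEnd (J := J) (l₀ := l₀)) :=
    Function.Injective.of_comp (f := inl) <| injective_of_isPath_of_two_mul_lt_girth chainWalk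
      (chainWalk_isPath (by omega)) chainWalk_length_le (by omega) chainWalk_support_injective
  have h₀ : Nat.card {p // J p l₀} = k + 1 := by
    rw [← Set.coe_ofPred, Nat.card_coe_set_eq, hlines]
  have h₁ : Nat.card (Level1 J l₀) = (k + 1) * (t * k) := by
    rw [Nat.card_sigma_of_card_eq fun p => card_branch hlines hpoints p.2, h₀]
  have h₂ : Nat.card (Level2 J l₀) = (k + 1) * (t * k) * (t * k) := by
    rw [Nat.card_sigma_of_card_eq fun c => card_branch hlines hpoints c.2.2.2.1, h₁]
  calc (k + 1) * (1 + t * k + (t * k) ^ 2)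
      = Nat.card ({p // J p l₀} ⊕ Level1 J l₀ ⊕ Level2 J l₀) := by
        rw [Nat.card_sum, Nat.card_sum, h₀, h₁, h₂]; ring
    _ ≤ Nat.card Q := Nat.card_le_card_of_injective _ hinj

end LowerBound

section UpperBound

variable {P L : Type*} {I : P → L → Prop} {P' : Set P} {L' : Set L} {s t k : ℕ} {l : L}

lemma exists_chain_to_line (hconn : (IncidenceGraph I).Connected)
    (hdist : ∀ a b, (IncidenceGraph I).dist a b ≤ 6) (hdeg : ∀ p, {l | I p l}.ncard = t + 1)
    (hdeg' : ∀ p : P', {l : L' | I p l}.ncard = t + 1) (hl : l ∉ L')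
    (hmeet : ∀ m ∈ L', ∀ x, I x l → ¬ I x m) (p : P') :
    ∃ x : {x // I x l}, ∃ n : {n // I x n ∧ n ≠ l}, ∃ m : L', I p m ∧
      ∃ y ∉ P', I y m ∧ I y n ∧ (n : L) ∉ L' := by
  have ideal : ∀ p : P', ∀ {m}, I p m → m ∈ L' := fun p _ => mem_of_incident (hdeg p) (hdeg' p)
  obtain ⟨w, hw⟩ := (hconn (inl p) (inr l)).exists_walk_length_eq_dist
  rcases exists_chain_of_walk w (hw ▸ hdist _ _) with
    hpl | ⟨m, x, hpm, hxm, hxl⟩ | ⟨m, y, n, x, hpm, hym, hyn, hxn, hxl⟩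
  · exact absurd (ideal p hpl) hl
  · exact absurd hxm (hmeet m (ideal p hpm) x hxl)
  have hm : m ∈ L' := ideal p hpm
  have hn : n ∉ L' := fun hn => hmeet n hn x hxl hxn
  have hnl : n ≠ l := by
    rintro rfl
    exact hmeet m hm y hyn hym
  have hy : y ∉ P' := fun hy => hn (ideal ⟨y, hy⟩ hyn)
  exact ⟨⟨x, hxl⟩, ⟨n, hxn, hnl⟩, ⟨m, hm⟩, hpm, y, hy, hym, hyn, hn⟩

lemma card_points_le_of_unblocked_line [Finite P] [Finite L]
    (hg : 10 < (IncidenceGraph I).girth) (hconn : (IncidenceGraph I).Connected)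
    (hdist : ∀ a b, (IncidenceGraph I).dist a b ≤ 6) (hord : HasOrder I s t)
    (hconn' : (IncidenceGraph (fun (p : P') (l : L') => I p l)).Connected)
    (hdist' : ∀ a b, (IncidenceGraph (fun (p : P') (l : L') => I p l)).dist a b ≤ 6)
    (hord' : HasOrder (fun (p : P') (l : L') => I p l) k t) (hl : l ∉ L')
    (hmeet : ∀ m ∈ L', ∀ x, I x l → ¬ I x m) :
    Nat.card P' ≤ (k + 1) * ((s + 1) * t) := by
  choose x n m hpm y hy hym hyn hn using
    exists_chain_to_line hconn hdist hord.2 hord'.2 hl hmeet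
  let f : P' → Σ x : {x // I x l}, {n // I x n ∧ n ≠ l} := fun p => ⟨x p, n p⟩
  have hfiber : ∀ p q, f p = f q → m p = m q := fun p q h =>
    eq_of_incident_of_not_mem hg hconn' hdist' (hy p) (hn p) (hym p) (hyn p) (hym q)
      (congrArg (fun z => (z.2 : L)) h ▸ hyn q)
  have hcard : Nat.card (Σ x : {x // I x l}, {n // I x n ∧ n ≠ l}) = (s + 1) * t := by
    rw [Nat.card_sigma_of_card_eq fun x : {x // I x l} =>
        Nat.card_and_ne_of_ncard_eq (R := fun n => I x n) (hord.2 x) x.2,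
      ← Set.coe_ofPred, Nat.card_coe_set_eq, hord.1]
  refine hcard ▸ Nat.card_le_mul_card_of_ncard_fiber_le f fun b => ?_
  rcases Set.eq_empty_or_nonempty {p | f p = b} with hempty | ⟨p, rfl⟩
  · simp [hempty]
  calc {q | f q = f p}.ncard ≤ {q : P' | I q (m p)}.ncard :=
        Set.ncard_le_ncard fun q hq => hfiber p q hq.symm ▸ hpm q
    _ = k + 1 := hord'.1 (m p)

end UpperBound

end IncidenceGraph

theorem ideal_subhexagon_blocks_lines_general
    {P L : Type} [Fintype P] [Fintype L] (I : P → L → Prop) (s t k : ℕ)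
    (hk : 1 ≤ k)
    (hΓ : IsWeakGenHexagon I) (hord : HasOrder I s t)
    (P' : Set P) (L' : Set L)
    (hΓ' : IsWeakGenHexagon (fun (p : P') (l : L') => I p.1 l.1))
    (hord' : HasOrder (fun (p : P') (l : L') => I p.1 l.1) k t)
    (hkt : k ^ 2 * t = s) :
    ∀ l : L, l ∈ L' ∨ ∃ m ∈ L', ∃ p : P, I p l ∧ I p m := by
  intro l
  by_contra! hl
  obtain ⟨l₀⟩ : Nonempty L' := by
    obtain ⟨p | l₀⟩ := hΓ'.1.nonempty
    · obtain ⟨l₀, -⟩ := Set.nonempty_of_ncard_ne_zero (s := {l : L' | I p l})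
        (by rw [hord'.2 p]; omega)
      exact ⟨l₀⟩
    · exact ⟨l₀⟩
  have hlower := IncidenceGraph.card_points_ge (hΓ'.2.1 ▸ by norm_num) hord'.1 hord'.2 l₀
  have hupper := IncidenceGraph.card_points_le_of_unblocked_line (hΓ.2.1 ▸ by norm_num) hΓ.1
    hΓ.2.2 hord hΓ'.1 hΓ'.2.2 hord' hl.1 hl.2
  subst hkt
  have := Nat.le_of_mul_le_mul_left (hlower.trans hupper) k.succ_pos
  nlinarith

/-- If Γ' = (P', L') is an ideal subhexagon of order (k,t) of a
finite weak generalized hexagon Γ of order (s,t) and k²·t = s, then every line of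
Γ either belongs to L' or shares an incident point with some line of L'. -/
theorem ideal_subhexagon_blocks_lines
    {P L : Type} [Fintype P] [Fintype L] (I : P → L → Prop) (s t k : ℕ)
    (hs : 1 ≤ s) (ht : 1 ≤ t) (hk : 1 ≤ k)
    (hΓ : IsWeakGenHexagon I) (hord : HasOrder I s t)
    (P' : Set P) (L' : Set L)
    (hΓ' : IsWeakGenHexagon (fun (p : P') (l : L') => I p.1 l.1))
    (hord' : HasOrder (fun (p : P') (l : L') => I p.1 l.1) k t)
    (hkt : k ^ 2 * t = s) :
    ∀ l : L, l ∈ L' ∨ ∃ m ∈ L', ∃ p : P, I p l ∧ I p m :=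
  ideal_subhexagon_blocks_lines_general I s t k hk hΓ hord P' L' hΓ' hord' hkt
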